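/- For every even integer m ≥ 2 and every integer n ≥ 1, Σ_{k=1}^{m} (−1)^{k+1}·Q_n(k, m−k) = G_{n-1}(m+1, 0). -/

import Mathlib

/-- A Dyck path: a finite sequence of ±1 steps with all partial sums nonnegative
and total sum zero. -/
def IsDyckPath (p : List ℤ) : Prop :=
  (∀ s ∈ p, s = 1 ∨ s = -1) ∧ (∀ k, 0 ≤ (p.take k).sum) ∧ p.sum = 0

/-- The height of a path: the maximum of its partial sums (0 for the empty path). -/
def pathHeight (p : List ℤ) : ℕ :=
  Finset.sup (Finset.range (p.length + 1)) (fun k => ((p.take k).sum).toNat)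

/-- Super-Catalan numbers `T(m,n) = (2m)!(2n)!/(2·m!·n!·(m+n)!)`, as a rational number. -/
def superCatalan (m n : ℕ) : ℚ :=
  ((2 * m).factorial * (2 * n).factorial : ℚ) /
    (2 * m.factorial * n.factorial * (m + n).factorial)

/-- `G n m k`: the number of `m`-tuples of Dyck paths of total length `2n` all of whose
pairwise height differences are at most `k` (this is `0` when `n < 0`). -/
noncomputable def G (n : ℤ) (m k : ℕ) : ℕ :=
  Nat.card {p : Fin m → List ℤ //
    (∀ i, IsDyckPath (p i)) ∧
    (∑ i, ((p i).length : ℤ)) = 2 * n ∧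
    ∀ i j, |(pathHeight (p i) : ℤ) - (pathHeight (p j) : ℤ)| ≤ (k : ℤ)}

/-- The path-height function `P n [a₁,…,aₘ]`: the number of `m`-tuples of Dyck paths
of total length `2n` whose `i`-th path has height `aᵢ`. -/
noncomputable def P (n : ℤ) (a : List ℕ) : ℕ :=
  Nat.card {p : Fin a.length → List ℤ //
    (∀ i, IsDyckPath (p i)) ∧
    (∑ i, ((p i).length : ℤ)) = 2 * n ∧
    ∀ i, pathHeight (p i) = a.get i}

/-- `Qx n x [a₀,…,a_k]` is `P n` evaluated at `a₀` copies of `x`, `a₁` copies of `x+1`, …,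
`a_k` copies of `x+k`. -/
noncomputable def Qx (n : ℤ) (x : ℕ) (a : List ℕ) : ℕ :=
  P n (a.zipIdx.flatMap fun q => List.replicate q.1 (x + q.2))

/-- The grouped path-height function `Q n a = ∑_{x=0}^∞ Qx n x a`. Whenever some entry
of `a` is positive (as in every application below) all terms with `x > n` vanish, since
a Dyck path of height at least `x` has length at least `2x`; so the infinite sum equals
its truncation at `x = n`. -/
noncomputable def Q (n : ℤ) (a : List ℕ) : ℕ :=
  ∑ x ∈ Finset.range (n.toNat + 1), Qx n x a

/-!
Let `F_x` be the generating function, by semilength, of Dyck paths of height exactly `x`.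
Counting tuples coordinatewise gives `Q_n(k, m-k) = ∑_x [tⁿ] F_x^k F_{x+1}^(m-k)` and
`G_{n-1}(m+1, 0) = ∑_x [tⁿ⁻¹] F_x^(m+1)`. The first-return decomposition `r = p.nest + q` yields
`F_x = t^x / (p_x p_{x+1})` for the Fibonacci polynomials `p_{x+2} = p_{x+1} - t p_x`, which
satisfy the Cassini identity `p_{x+1}² - p_x p_{x+2} = t^(x+1)`. For even `m` the alternating sum
`∑_k (-1)^(k+1) F_x^k F_{x+1}^(m-k)` equals `(F_x F_{x+1}^m - F_x^(m+1)) / (F_x + F_{x+1})`,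
and the Cassini identity rewrites it as `t F_x^(m+1) + g_{x+1} - g_x` with
`g_x = F_x^m p_{x+1} / p_x`. Summing over `x` telescopes; `g_0 = 1`, and `t^(n+1)` divides
`g_{n+1}`, so neither contributes to the coefficient of `tⁿ`.
-/

open Finset PowerSeries

/-! ### Alternating sums and Fibonacci polynomials -/

lemma mul_sum_alternating {R : Type*} [CommRing R] (A B : R) (m : ℕ) :
    (A + B) * ∑ k ∈ Icc 1 m, (-1) ^ (k + 1) * (A ^ k * B ^ (m - k)) =
      A * B ^ m - (-1) ^ m * A ^ (m + 1) := by
  induction m with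
  | zero => simp
  | succ m ih =>
    have hrec : ∑ k ∈ Icc 1 (m + 1), (-1 : R) ^ (k + 1) * (A ^ k * B ^ (m + 1 - k)) =
        B * ∑ k ∈ Icc 1 m, (-1) ^ (k + 1) * (A ^ k * B ^ (m - k)) + (-1) ^ m * A ^ (m + 1) := by
      rw [sum_Icc_succ_top (by omega), mul_sum, Nat.sub_self, pow_zero, mul_one]
      refine congrArg₂ (· + ·) (sum_congr rfl fun k hk => ?_) (by ring)
      rw [Nat.sub_add_comm (mem_Icc.mp hk).2]
      ring
    rw [hrec]
    linear_combination B * ih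

theorem alternating_sum_eq_of_cassini {R : Type*} [CommRing R] [IsDomain R]
    {t s p₀ p₁ p₂ q₀ q₁ A B : R} {m : ℕ} (hm : Even m) (hp₂ : p₂ = p₁ - t * p₀)
    (hcassini : p₁ ^ 2 = p₀ * p₂ + t * s) (hA : A * (p₀ * p₁) = s) (hB : B * (p₁ * p₂) = t * s)
    (hs : s ≠ 0) (hq₀ : q₀ * p₀ = 1) (hq₁ : q₁ * p₁ = 1) :
    ∑ k ∈ Icc 1 m, (-1) ^ (k + 1) * (A ^ k * B ^ (m - k)) =
      t * A ^ (m + 1) + B ^ m * p₂ * q₁ - A ^ m * p₁ * q₀ := by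
  have hp₀ : p₀ ≠ 0 := right_ne_zero_of_mul_eq_one hq₀
  have hp₁ : p₁ ≠ 0 := right_ne_zero_of_mul_eq_one hq₁
  have hsum : (A + B) * (p₀ * p₂) = s :=
    mul_right_cancel₀ hp₁ (by linear_combination p₂ * hA + p₀ * hB + s * hp₂)
  have hAB : A + B ≠ 0 := fun h => hs (by rw [← hsum, h, zero_mul])
  have htel := mul_sum_alternating A B m
  rw [hm.neg_one_pow, one_mul] at htel
  -- after multiplying by `A + B`, `htel`, `hA` and `hsum` reduce the claim to `hcassini`
  refine mul_left_cancel₀ (mul_ne_zero hAB (mul_ne_zero hp₀ hp₁)) ?_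
  linear_combination p₀ * p₁ * htel + B ^ m * (hA - hsum) +
    A ^ m * ((A + B) * hcassini + hsum - hA - t * (A + B) * hA) -
    (A + B) * p₀ * p₂ * B ^ m * hq₁ + (A + B) * p₁ ^ 2 * A ^ m * hq₀

def fibonacciPoly {R : Type*} [CommRing R] (t : R) : ℕ → R
  | 0 => 1
  | 1 => 1
  | x + 2 => fibonacciPoly t (x + 1) - t * fibonacciPoly t x

section FibonacciPoly

variable {R : Type*} [CommRing R] (t : R)

@[simp] lemma fibonacciPoly_zero : fibonacciPoly t 0 = 1 := rfl

@[simp] lemma fibonacciPoly_one : fibonacciPoly t 1 = 1 := rfl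

lemma fibonacciPoly_add_two (x : ℕ) :
    fibonacciPoly t (x + 2) = fibonacciPoly t (x + 1) - t * fibonacciPoly t x := rfl

lemma fibonacciPoly_sq (x : ℕ) :
    fibonacciPoly t (x + 1) ^ 2 = fibonacciPoly t x * fibonacciPoly t (x + 2) + t ^ (x + 1) := by
  induction x with
  | zero => simp [fibonacciPoly_add_two]
  | succ x ih =>
    linear_combination t * ih + fibonacciPoly t (x + 2) * fibonacciPoly_add_two t x -
      fibonacciPoly t (x + 1) * fibonacciPoly_add_two t (x + 1)

end FibonacciPoly

lemma constantCoeff_fibonacciPoly (x : ℕ) :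
    constantCoeff (fibonacciPoly (X : ℚ⟦X⟧) x) = 1 := by
  induction x using Nat.twoStepInduction with
  | zero => simp
  | one => simp
  | more x _ ih => simp [fibonacciPoly_add_two, ih]

lemma inv_mul_fibonacciPoly (x : ℕ) :
    (fibonacciPoly (X : ℚ⟦X⟧) x)⁻¹ * fibonacciPoly X x = 1 :=
  PowerSeries.inv_mul_cancel _ (by simp [constantCoeff_fibonacciPoly])

/-! ### Generating functions of weighted types -/

noncomputable def countingSeries {α : Type*} (w : α → ℕ) : ℚ⟦X⟧ :=
  PowerSeries.mk fun n => (Nat.card {a // w a = n} : ℚ)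

section CountingSeries

variable {α β : Type*}

lemma coeff_countingSeries (w : α → ℕ) (n : ℕ) :
    coeff n (countingSeries w) = Nat.card {a // w a = n} :=
  coeff_mk _ _

lemma countingSeries_congr {w : α → ℕ} {v : β → ℕ} (e : α ≃ β) (h : ∀ a, v (e a) = w a) :
    countingSeries v = countingSeries w := by
  ext n
  simp only [coeff_countingSeries]
  exact congrArg _ (Nat.card_congr (e.subtypeEquiv fun a => by rw [h])).symm

lemma countingSeries_eq_one [Unique α] {w : α → ℕ} (hw : ∀ a, w a = 0) :
    countingSeries w = 1 := by
  ext (_ | n) <;> simp [coeff_countingSeries, hw]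

lemma countingSeries_option (w : α → ℕ) :
    countingSeries (fun o : Option α => o.elim 0 (w · + 1)) = 1 + X * countingSeries w := by
  ext (_ | n)
  · rw [coeff_countingSeries, map_add, coeff_zero_X_mul, add_zero, coeff_one, if_pos rfl,
      Nat.cast_eq_one, Nat.card_eq_one_iff_unique]
    refine ⟨⟨?_⟩, ⟨⟨none, rfl⟩⟩⟩
    rintro ⟨_ | a, ha⟩ ⟨_ | b, hb⟩ <;>
      first | rfl | exact absurd ha (Nat.succ_ne_zero _) | exact absurd hb (Nat.succ_ne_zero _)
  · rw [coeff_countingSeries, map_add, coeff_one, coeff_succ_X_mul, coeff_countingSeries,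
      if_neg n.succ_ne_zero, zero_add]
    refine congrArg _ (Nat.card_eq_of_bijective (fun a => ⟨some a.1, by simp [a.2]⟩) ⟨?_, ?_⟩).symm
    · intro a b h
      exact Subtype.ext (Option.some_injective _ (congrArg Subtype.val h))
    · rintro ⟨_ | a, h⟩
      · simp at h
      · exact ⟨⟨a, by simpa using h⟩, rfl⟩

lemma countingSeries_sum (v : α → ℕ) (w : β → ℕ) [∀ n, Finite {a // v a = n}]
    [∀ n, Finite {b // w b = n}] :
    countingSeries (Sum.elim v w) = countingSeries v + countingSeries w := by
  ext n
  simp only [map_add, coeff_countingSeries, Nat.card_congr Equiv.subtypeSum, Nat.card_sum,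
    Sum.elim_inl, Sum.elim_inr, Nat.cast_add]

def fiberAddEquiv (v : α → ℕ) (w : β → ℕ) (n : ℕ) :
    {x : α × β // v x.1 + w x.2 = n} ≃
      Σ ij : antidiagonal n, {a // v a = ij.1.1} × {b // w b = ij.1.2} where
  toFun x :=
    ⟨⟨(v x.1.1, w x.1.2), HasAntidiagonal.mem_antidiagonal.mpr x.2⟩, ⟨x.1.1, rfl⟩, ⟨x.1.2, rfl⟩⟩
  invFun s := ⟨(s.2.1.1, s.2.2.1), by
    rw [s.2.1.2, s.2.2.2]
    exact HasAntidiagonal.mem_antidiagonal.mp s.1.2⟩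
  left_inv _ := rfl
  right_inv := by
    rintro ⟨⟨⟨i, j⟩, hij⟩, ⟨a, ha⟩, ⟨b, hb⟩⟩
    dsimp only at ha hb
    subst ha hb
    rfl

lemma countingSeries_add (v : α → ℕ) (w : β → ℕ) [∀ n, Finite {a // v a = n}]
    [∀ n, Finite {b // w b = n}] :
    countingSeries (fun x : α × β => v x.1 + w x.2) = countingSeries v * countingSeries w := by
  ext n
  rw [coeff_countingSeries, coeff_mul, Nat.card_congr (fiberAddEquiv v w n), Nat.card_sigma,
    Nat.cast_sum]
  simp only [Nat.card_prod, Nat.cast_mul, coeff_countingSeries]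
  exact sum_coe_sort (antidiagonal n) fun ij =>
    (Nat.card {a // v a = ij.1} : ℚ) * Nat.card {b // w b = ij.2}

instance finite_fiber_pi {k : ℕ} {α : Fin k → Type*} (w : ∀ i, α i → ℕ)
    [∀ i n, Finite {a // w i a = n}] (n : ℕ) :
    Finite {p : ∀ i, α i // ∑ i, w i (p i) = n} := by
  refine Finite.of_injective
    (fun p i => (⟨⟨w i (p.1 i), ?_⟩, p.1 i, rfl⟩ : Σ j : Fin (n + 1), {a // w i a = j})) ?_
  · have := single_le_sum (f := fun j => w j (p.1 j)) (fun j _ => Nat.zero_le _) (mem_univ i)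
    have := p.2
    omega
  · intro p q h
    exact Subtype.ext (funext fun i => congrArg (fun s => s.2.1) (congrFun h i))

lemma countingSeries_pi {k : ℕ} {α : Fin k → Type*} (w : ∀ i, α i → ℕ)
    [∀ i n, Finite {a // w i a = n}] :
    countingSeries (fun p : (∀ i, α i) => ∑ i, w i (p i)) = ∏ i, countingSeries (w i) := by
  induction k with
  | zero => exact countingSeries_eq_one fun _ => sum_empty
  | succ k ih =>
    rw [Fin.prod_univ_succ, ← ih, ← countingSeries_add]
    exact countingSeries_congr (Fin.consEquiv α) fun p => Fin.sum_univ_succ _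

end CountingSeries

/-! ### Heights of Dyck paths -/

lemma pathHeight_nil : pathHeight [] = 0 := rfl

lemma pathHeight_le_iff {l : List ℤ} {c : ℤ} :
    (pathHeight l : ℤ) ≤ c ↔ ∀ k, (l.take k).sum ≤ c := by
  have hc : (pathHeight l : ℤ) ≤ c ↔ ∀ k < l.length + 1, (l.take k).sum ≤ c := by
    rcases lt_or_ge c 0 with hc | hc
    · exact iff_of_false (by omega) fun h => by simpa using (h 0 (by omega)).trans_lt hc
    · lift c to ℕ using hc
      simp [pathHeight, Int.toNat_le]
  rw [hc]
  refine ⟨fun h k => ?_, fun h k _ => h k⟩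
  rcases le_or_gt k l.length with hk | hk
  · exact h k (by omega)
  · rw [List.take_of_length_le hk.le, ← List.take_length (l := l)]
    exact h _ (by omega)

lemma pathHeight_cons (s : ℤ) (l : List ℤ) :
    (pathHeight (s :: l) : ℤ) = max 0 (s + pathHeight l) := by
  refine eq_of_forall_ge_iff fun c => ?_
  rw [pathHeight_le_iff, max_le_iff, add_comm, ← le_sub_iff_add_le, pathHeight_le_iff]
  constructor
  · intro h
    refine ⟨by simpa using h 0, fun k => ?_⟩
    have := h (k + 1)
    rw [List.take_succ_cons, List.sum_cons] at this
    linarith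
  · rintro ⟨h0, h⟩ (_ | k)
    · simpa using h0
    · rw [List.take_succ_cons, List.sum_cons]
      linarith [h k]

lemma pathHeight_append (a b : List ℤ) :
    (pathHeight (a ++ b) : ℤ) = max (pathHeight a : ℤ) (a.sum + pathHeight b) := by
  induction a with
  | nil => simp [pathHeight_nil]
  | cons s a ih =>
    rw [List.cons_append, pathHeight_cons, ih, pathHeight_cons, List.sum_cons]
    simp only [max_def]
    split_ifs <;> omega

open DyckStep

def DyckStep.toInt : DyckStep → ℤ
  | U => 1
  | D => -1

lemma DyckStep.sum_map_toInt (L : List DyckStep) :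
    (L.map toInt).sum = L.count U - L.count D := by
  induction L with
  | nil => simp
  | cons s L ih =>
    cases s <;>
    simp only [List.map_cons, List.sum_cons, toInt, ih, List.count_cons_self,
      List.count_cons_of_ne (by decide : U ≠ D), List.count_cons_of_ne (by decide : D ≠ U),
      Nat.cast_add, Nat.cast_one] <;> ring

namespace DyckWord

def toPath (p : DyckWord) : List ℤ := p.toList.map DyckStep.toInt

@[simp] lemma toPath_add (p q : DyckWord) : (p + q).toPath = p.toPath ++ q.toPath :=
  List.map_append ..

@[simp] lemma toPath_nest (p : DyckWord) : p.nest.toPath = 1 :: (p.toPath ++ [-1]) := by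
  simp [toPath, nest, DyckStep.toInt]

lemma length_toPath (p : DyckWord) : p.toPath.length = 2 * p.semilength := by
  simp [toPath]

lemma sum_toPath (p : DyckWord) : p.toPath.sum = 0 := by
  rw [toPath, DyckStep.sum_map_toInt, p.count_U_eq_count_D, sub_self]

lemma isDyckPath_toPath (p : DyckWord) : IsDyckPath p.toPath := by
  refine ⟨?_, fun k => ?_, p.sum_toPath⟩
  · simp only [toPath, List.mem_map]
    rintro _ ⟨s, -, rfl⟩
    cases s <;> simp [DyckStep.toInt]
  · rw [toPath, ← List.map_take, DyckStep.sum_map_toInt, sub_nonneg]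
    exact_mod_cast p.count_D_le_count_U k

lemma toPath_injective : Function.Injective toPath := fun p q h =>
  DyckWord.ext <| (List.map_injective_iff.mpr fun s t => by
    cases s <;> cases t <;> simp [DyckStep.toInt]) h

lemma exists_toPath_eq {l : List ℤ} (hl : IsDyckPath l) : ∃ p : DyckWord, p.toPath = l := by
  let ofInt (z : ℤ) : DyckStep := if z = 1 then U else D
  have hround : ∀ l' : List ℤ, l' ⊆ l → (l'.map ofInt).map DyckStep.toInt = l' := by
    intro l' hl'
    rw [List.map_map, List.map_congr_left, List.map_id]
    intro z hz
    rcases hl.1 z (hl' hz) with rfl | rfl <;> rfl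
  have hcount : ∀ l' : List ℤ, l' ⊆ l →
      l'.sum = (l'.map ofInt).count U - (l'.map ofInt).count D := fun l' hl' => by
    rw [← DyckStep.sum_map_toInt, hround l' hl']
  refine ⟨⟨l.map ofInt, ?_, fun i => ?_⟩, hround l (List.Subset.refl l)⟩
  · have := hcount l (List.Subset.refl l)
    rw [hl.2.2] at this
    omega
  · have := hcount _ (List.take_subset i l)
    rw [List.map_take] at this
    have := hl.2.1 i
    omega

noncomputable def equivPath : DyckWord ≃ {l : List ℤ // IsDyckPath l} :=
  Equiv.ofBijective (fun p => ⟨p.toPath, p.isDyckPath_toPath⟩)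
    ⟨fun _ _ h => toPath_injective (congrArg Subtype.val h),
      fun ⟨_, hl⟩ => (exists_toPath_eq hl).imp fun _ h => Subtype.ext h⟩

lemma toPath_equivPath_symm (l : {l : List ℤ // IsDyckPath l}) :
    (equivPath.symm l).toPath = l.1 :=
  congrArg Subtype.val (equivPath.apply_symm_apply l)

theorem nest_add_induction {motive : DyckWord → Prop} (p : DyckWord) (zero : motive 0)
    (nest_add : ∀ p q, motive p → motive q → motive (p.nest + q)) : motive p := by
  rw [← ofTree_toTree p]
  induction p.toTree with
  | nil => exact zero
  | node _ l r ihl ihr => exact nest_add _ _ ihl ihr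

def height (p : DyckWord) : ℕ := pathHeight p.toPath

@[simp] lemma height_zero : height 0 = 0 := rfl

@[simp] lemma height_add (p q : DyckWord) : (p + q).height = max p.height q.height := by
  have := pathHeight_append p.toPath q.toPath
  rw [sum_toPath, zero_add] at this
  simp only [height, toPath_add]
  omega

@[simp] lemma height_nest (p : DyckWord) : p.nest.height = p.height + 1 := by
  simp only [height, toPath_nest]
  zify
  rw [pathHeight_cons, pathHeight_append, sum_toPath, pathHeight_cons, pathHeight_nil]
  omega

lemma height_le_semilength (p : DyckWord) : p.height ≤ p.semilength := by
  induction p using nest_add_induction with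
  | zero => rfl
  | nest_add p q hp hq =>
    simp only [height_add, height_nest, semilength_add, semilength_nest]
    omega

@[simp] lemma height_eq_zero_iff {p : DyckWord} : p.height = 0 ↔ p = 0 := by
  refine ⟨fun h => ?_, fun h => h ▸ height_zero⟩
  induction p using nest_add_induction with
  | zero => rfl
  | nest_add p q => simp at h

lemma max_height_insidePart_outsidePart {p : DyckWord} (hp : p ≠ 0) :
    max (p.insidePart.height + 1) p.outsidePart.height = p.height := by
  rw [← height_nest, ← height_add, nest_insidePart_add_outsidePart hp]

/-- First-return decomposition: `none` is the empty word and `some (p, q)` is `p.nest + q`. -/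
def nestAddEquiv (x : ℕ) :
    Option ({p : DyckWord // p.height ≤ x} × {q : DyckWord // q.height ≤ x + 1}) ≃
      {r : DyckWord // r.height ≤ x + 1} where
  toFun o := o.elim ⟨0, by simp⟩ fun pq => ⟨pq.1.1.nest + pq.2.1, by
    have := pq.1.2; have := pq.2.2; simp only [height_add, height_nest]; omega⟩
  invFun r := if hr : r.1 = 0 then none else
    have := max_height_insidePart_outsidePart hr
    have := r.2
    some (⟨r.1.insidePart, by omega⟩, ⟨r.1.outsidePart, by omega⟩)
  left_inv := by
    rintro (_ | ⟨p, q⟩)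
    · rfl
    · have hne : p.1.nest + q.1 ≠ 0 := fun h => by simpa using congrArg semilength h
      simp only [Option.elim, dif_neg hne, insidePart_add nest_ne_zero, insidePart_nest,
        outsidePart_add nest_ne_zero, outsidePart_nest, zero_add]
  right_inv := by
    rintro ⟨r, hr⟩
    by_cases h : r = 0
    · subst h
      rfl
    · simp only [dif_neg h, Option.elim, nest_insidePart_add_outsidePart h]

end DyckWord

open DyckWord

lemma two_mul_pathHeight_le_length {l : List ℤ} (hl : IsDyckPath l) :
    2 * pathHeight l ≤ l.length := by
  obtain ⟨p, rfl⟩ := exists_toPath_eq hl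
  rw [length_toPath]
  exact Nat.mul_le_mul_left 2 (height_le_semilength p)

/-! ### Generating functions of Dyck paths of bounded height -/

noncomputable def exactHeightSeries (x : ℕ) : ℚ⟦X⟧ :=
  countingSeries fun p : {p : DyckWord // p.height = x} => p.1.semilength

noncomputable def boundedHeightSeries (x : ℕ) : ℚ⟦X⟧ :=
  countingSeries fun p : {p : DyckWord // p.height ≤ x} => p.1.semilength

instance (P : DyckWord → Prop) (n : ℕ) :
    Finite {p : {p : DyckWord // P p} // p.1.semilength = n} :=
  Finite.of_injective (fun p => (⟨p.1.1, p.2⟩ : {p : DyckWord // p.semilength = n}))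
    fun _ _ h => Subtype.ext (Subtype.ext (Subtype.mk.inj h))

lemma exactHeightSeries_zero : exactHeightSeries 0 = 1 :=
  have : Unique {p : DyckWord // p.height = 0} :=
    { default := ⟨0, height_zero⟩
      uniq := fun p => Subtype.ext (height_eq_zero_iff.mp p.2) }
  countingSeries_eq_one fun p => by rw [height_eq_zero_iff.mp p.2, semilength_zero]

lemma boundedHeightSeries_zero : boundedHeightSeries 0 = 1 :=
  (countingSeries_congr (Equiv.subtypeEquivRight fun _ => Nat.le_zero.symm) fun _ => rfl).trans
    exactHeightSeries_zero

lemma boundedHeightSeries_succ_eq_add (x : ℕ) :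
    boundedHeightSeries (x + 1) = boundedHeightSeries x + exactHeightSeries (x + 1) := by
  rw [boundedHeightSeries, boundedHeightSeries, exactHeightSeries, ← countingSeries_sum]
  refine countingSeries_congr ((subtypeOrEquiv _ _ ?_).symm.trans
    (Equiv.subtypeEquivRight fun _ => Nat.le_succ_iff.symm)) (by rintro (_ | _) <;> rfl)
  exact Pi.disjoint_iff.mpr fun p => Prop.disjoint_iff.mpr (by omega)

lemma boundedHeightSeries_succ (x : ℕ) : boundedHeightSeries (x + 1) =
    1 + X * (boundedHeightSeries x * boundedHeightSeries (x + 1)) := by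
  rw [boundedHeightSeries, boundedHeightSeries, ← countingSeries_add, ← countingSeries_option]
  refine countingSeries_congr (nestAddEquiv x) ?_
  rintro (_ | ⟨p, q⟩)
  · rfl
  · simp only [nestAddEquiv, Equiv.coe_fn_mk, Option.elim, semilength_add, semilength_nest]
    omega

lemma boundedHeightSeries_mul_fibonacciPoly (x : ℕ) :
    boundedHeightSeries x * fibonacciPoly X (x + 1) = fibonacciPoly X x := by
  induction x with
  | zero => simp [boundedHeightSeries_zero]
  | succ x ih =>
    linear_combination fibonacciPoly X (x + 1) * boundedHeightSeries_succ x +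
      X * boundedHeightSeries (x + 1) * ih +
      boundedHeightSeries (x + 1) * fibonacciPoly_add_two (X : ℚ⟦X⟧) x

lemma exactHeightSeries_mul_fibonacciPoly (x : ℕ) :
    exactHeightSeries x * (fibonacciPoly X x * fibonacciPoly X (x + 1)) = X ^ x := by
  cases x with
  | zero => simp [exactHeightSeries_zero]
  | succ x =>
    rw [eq_sub_of_add_eq' (boundedHeightSeries_succ_eq_add x).symm]
    linear_combination fibonacciPoly X (x + 1) * boundedHeightSeries_mul_fibonacciPoly (x + 1) -
      fibonacciPoly X (x + 2) * boundedHeightSeries_mul_fibonacciPoly x +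
      fibonacciPoly_sq (X : ℚ⟦X⟧) x

lemma X_pow_dvd_exactHeightSeries (x : ℕ) : X ^ x ∣ exactHeightSeries x := by
  refine X_pow_dvd_iff.mpr fun j hj => ?_
  rw [exactHeightSeries, coeff_countingSeries, Nat.cast_eq_zero, Nat.card_eq_zero]
  exact Or.inl ⟨fun p => by have := height_le_semilength p.1.1; have := p.1.2; have := p.2; omega⟩

noncomputable def telescopingTerm (m x : ℕ) : ℚ⟦X⟧ :=
  exactHeightSeries x ^ m * fibonacciPoly X (x + 1) * (fibonacciPoly X x)⁻¹

lemma telescopingTerm_zero (m : ℕ) : telescopingTerm m 0 = 1 := by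
  simp [telescopingTerm, exactHeightSeries_zero]

lemma X_pow_dvd_telescopingTerm {m : ℕ} (hm : m ≠ 0) (x : ℕ) : X ^ x ∣ telescopingTerm m x :=
  dvd_mul_of_dvd_left (dvd_mul_of_dvd_left (dvd_pow (X_pow_dvd_exactHeightSeries x) hm) _) _

lemma sum_alternating_exactHeightSeries {m : ℕ} (hm : Even m) (x : ℕ) :
    ∑ k ∈ Icc 1 m, (-1) ^ (k + 1) *
        (exactHeightSeries x ^ k * exactHeightSeries (x + 1) ^ (m - k)) =
      X * exactHeightSeries x ^ (m + 1) + telescopingTerm m (x + 1) - telescopingTerm m x :=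
  alternating_sum_eq_of_cassini hm (fibonacciPoly_add_two X x)
    (by rw [← pow_succ']; exact fibonacciPoly_sq X x) (exactHeightSeries_mul_fibonacciPoly x)
    (by rw [← pow_succ']; exact exactHeightSeries_mul_fibonacciPoly (x + 1))
    (pow_ne_zero x X_ne_zero) (inv_mul_fibonacciPoly x) (inv_mul_fibonacciPoly (x + 1))

lemma coeff_succ_sum_alternating {m : ℕ} (hm : Even m) (hm₀ : m ≠ 0) (n : ℕ) :
    coeff (n + 1) (∑ x ∈ range (n + 2), ∑ k ∈ Icc 1 m,
        (-1) ^ (k + 1) * (exactHeightSeries x ^ k * exactHeightSeries (x + 1) ^ (m - k))) =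
      coeff n (∑ x ∈ range (n + 1), exactHeightSeries x ^ (m + 1)) := by
  have htel : ∑ x ∈ range (n + 2), ∑ k ∈ Icc 1 m,
      (-1) ^ (k + 1) * (exactHeightSeries x ^ k * exactHeightSeries (x + 1) ^ (m - k)) =
        X * ∑ x ∈ range (n + 2), exactHeightSeries x ^ (m + 1) +
          (telescopingTerm m (n + 2) - telescopingTerm m 0) := by
    rw [← sum_range_sub, mul_sum, ← sum_add_distrib]
    exact sum_congr rfl fun x _ => by rw [sum_alternating_exactHeightSeries hm, add_sub_assoc]
  have hlast : coeff n (exactHeightSeries (n + 1) ^ (m + 1)) = 0 :=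
    X_pow_dvd_iff.mp (dvd_pow (X_pow_dvd_exactHeightSeries (n + 1)) m.succ_ne_zero) n
      n.lt_succ_self
  have htop : coeff (n + 1) (telescopingTerm m (n + 2)) = 0 :=
    X_pow_dvd_iff.mp (X_pow_dvd_telescopingTerm hm₀ (n + 2)) (n + 1) (n + 1).lt_succ_self
  rw [htel, map_add, map_sub, coeff_succ_X_mul, htop, telescopingTerm_zero, coeff_one,
    sum_range_succ _ (n + 1), map_add, hlast]
  simp

/-! ### Counting tuples of Dyck paths -/

abbrev HeightTuples (n : ℕ) {k : ℕ} (h : Fin k → ℕ) : Type :=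
  {p : Fin k → List ℤ // (∀ i, IsDyckPath (p i)) ∧ (∑ i, ((p i).length : ℤ)) = 2 * n ∧
    ∀ i, pathHeight (p i) = h i}

lemma sum_length_toPath {k : ℕ} (q : Fin k → DyckWord) :
    ∑ i, ((q i).toPath.length : ℤ) = 2 * ∑ i, (q i).semilength := by
  push_cast [length_toPath, mul_sum]
  rfl

noncomputable def heightTuplesEquiv (n : ℕ) {k : ℕ} (h : Fin k → ℕ) : HeightTuples n h ≃
    {q : ∀ i, {p : DyckWord // p.height = h i} // ∑ i, (q i).1.semilength = n} where
  toFun p := ⟨fun i => ⟨equivPath.symm ⟨p.1 i, p.2.1 i⟩, by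
      rw [height, toPath_equivPath_symm, p.2.2.2 i]⟩, by
    dsimp only
    have := sum_length_toPath fun i => equivPath.symm ⟨p.1 i, p.2.1 i⟩
    simp only [toPath_equivPath_symm, p.2.2.1] at this
    omega⟩
  invFun q := ⟨fun i => (q.1 i).1.toPath, fun i => isDyckPath_toPath _,
    by rw [sum_length_toPath, q.2], fun i => (q.1 i).2⟩
  left_inv p := Subtype.ext (funext fun i => toPath_equivPath_symm _)
  right_inv q := Subtype.ext (funext fun i => Subtype.ext (equivPath.symm_apply_apply _))

instance (n : ℕ) {k : ℕ} (h : Fin k → ℕ) : Finite (HeightTuples n h) :=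
  have := finite_fiber_pi (fun i (p : {p : DyckWord // p.height = h i}) => p.1.semilength) n
  Finite.of_equiv _ (heightTuplesEquiv n h).symm

lemma card_heightTuples (n : ℕ) {k : ℕ} (h : Fin k → ℕ) :
    (Nat.card (HeightTuples n h) : ℚ) = coeff n (∏ i, exactHeightSeries (h i)) := by
  rw [Nat.card_congr (heightTuplesEquiv n h), ← coeff_countingSeries,
    countingSeries_pi fun i (p : {p : DyckWord // p.height = h i}) => p.1.semilength]
  rfl

lemma cast_P_eq_coeff (n : ℕ) (a : List ℕ) :
    (P n a : ℚ) = coeff n ((a.map exactHeightSeries).prod) := by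
  rw [← Fin.prod_univ_fun_getElem]
  exact card_heightTuples n a.get

lemma cast_Q_pair_eq_sum_coeff (n k m : ℕ) : (Q n [k, m - k] : ℚ) =
    ∑ x ∈ range (n + 1),
      coeff n (exactHeightSeries x ^ k * exactHeightSeries (x + 1) ^ (m - k)) := by
  rw [Q, Int.toNat_natCast, Nat.cast_sum]
  refine sum_congr rfl fun x _ => ?_
  rw [Qx, cast_P_eq_coeff]
  simp

def equalHeightTuplesEquiv (n m : ℕ) : {p : Fin (m + 1) → List ℤ // (∀ i, IsDyckPath (p i)) ∧
    (∑ i, ((p i).length : ℤ)) = 2 * (n : ℤ) ∧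
    ∀ i j, |(pathHeight (p i) : ℤ) - (pathHeight (p j) : ℤ)| ≤ ((0 : ℕ) : ℤ)} ≃
      Σ x : Fin (n + 1), HeightTuples n fun _ : Fin (m + 1) => x.1 where
  toFun p := ⟨⟨pathHeight (p.1 0), by
      have := two_mul_pathHeight_le_length (p.2.1 0)
      have := single_le_sum (f := fun i => ((p.1 i).length : ℤ)) (fun i _ => by positivity)
        (mem_univ 0)
      have := p.2.2.1
      omega⟩,
    ⟨p.1, p.2.1, p.2.2.1, fun i => by
      have := abs_nonpos_iff.mp (p.2.2.2 i 0)
      dsimp only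
      omega⟩⟩
  invFun s := ⟨s.2.1, s.2.2.1, s.2.2.2.1, fun i j => by simp [s.2.2.2.2]⟩
  left_inv _ := rfl
  right_inv := by
    rintro ⟨x, p, hD, hs, hh⟩
    exact Sigma.subtype_ext (Fin.ext (hh 0)) rfl

lemma cast_G_eq_sum_coeff (n m : ℕ) : (G n (m + 1) 0 : ℚ) =
    ∑ x ∈ range (n + 1), coeff n (exactHeightSeries x ^ (m + 1)) := by
  rw [G, Nat.card_congr (equalHeightTuplesEquiv n m), Nat.card_sigma, Nat.cast_sum,
    ← Fin.sum_univ_eq_sum_range]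
  refine sum_congr rfl fun x _ => ?_
  rw [card_heightTuples, prod_const, card_univ, Fintype.card_fin]

lemma coeff_neg_one_pow_mul (j n : ℕ) (f : ℚ⟦X⟧) :
    coeff n ((-1 : ℚ⟦X⟧) ^ j * f) = (-1) ^ j * coeff n f := by
  rw [← map_one C, ← map_neg, ← map_pow, coeff_C_mul]

/-- For every even `m ≥ 2` and every `n ≥ 1`,
`∑_{k=1}^{m} (−1)^{k+1}·Q_n(k, m−k) = G_{n-1}(m+1, 0)`. -/
theorem grouped_alternator (m : ℕ) (hm : 2 ≤ m) (hme : Even m) (n : ℕ) (hn : 1 ≤ n) :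
    ∑ k ∈ Finset.Icc 1 m, (-1 : ℤ) ^ (k + 1) * Q (n : ℤ) [k, m - k] =
      G ((n : ℤ) - 1) (m + 1) 0 := by
  obtain ⟨n, rfl⟩ := Nat.exists_eq_add_of_le' hn
  rw [Nat.cast_succ, add_sub_cancel_right]
  suffices h : ∑ k ∈ Icc 1 m, (-1 : ℚ) ^ (k + 1) * Q (n + 1 : ℕ) [k, m - k] = G n (m + 1) 0 by
    exact_mod_cast h
  calc ∑ k ∈ Icc 1 m, (-1 : ℚ) ^ (k + 1) * Q (n + 1 : ℕ) [k, m - k]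
      = coeff (n + 1) (∑ x ∈ range (n + 2), ∑ k ∈ Icc 1 m,
          (-1) ^ (k + 1) * (exactHeightSeries x ^ k * exactHeightSeries (x + 1) ^ (m - k))) := by
        simp only [cast_Q_pair_eq_sum_coeff, mul_sum, map_sum, coeff_neg_one_pow_mul]
        exact sum_comm
    _ = coeff n (∑ x ∈ range (n + 1), exactHeightSeries x ^ (m + 1)) :=
        coeff_succ_sum_alternating hme (by omega) n
    _ = G n (m + 1) 0 := by rw [cast_G_eq_sum_coeff, map_sum]
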